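/- If R ∈ F_n^⊥, then for every uncountable antichain X ⊆ R there are σ, τ ∈ X with σ ∧ τ ∈ K^{[n]}. -/

import Mathlib

noncomputable section

namespace Basis5

/-- The first uncountable ordinal. -/
def omega1 : Ordinal.{0} := (Cardinal.aleph 1).ord

/-- A node of the binary tree `2^{<ω₁}`: a function defined (i.e. `some`-valued)
exactly on a countable ordinal. -/
def IsNodeFun (f : Ordinal.{0} → Option Bool) : Prop :=
  ∃ a, a < omega1 ∧ ∀ ξ, (f ξ).isSome ↔ ξ < a

def BNode := {f : Ordinal → Option Bool // IsNodeFun f}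

/-- The height (domain) of a node. -/
def ht (t : BNode) : Ordinal := sInf {a | ∀ ξ, (t.1 ξ).isSome ↔ ξ < a}

/-- Restriction of a node to (at most) height `α`. -/
def restrict (t : BNode) (α : Ordinal) : BNode :=
  ⟨fun ξ => if ξ < α then t.1 ξ else none, by
    obtain ⟨a, ha, hfa⟩ := t.2
    refine ⟨min α a, lt_of_le_of_lt (min_le_right _ _) ha, fun ξ => ?_⟩
    by_cases h : ξ < α
    · simp [h, hfa ξ, lt_min_iff]
    · simp [h, lt_min_iff]⟩

/-- `s` is an initial segment of `t` (the tree order of `2^{<ω₁}`). -/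
def extends' (s t : BNode) : Prop := restrict t (ht s) = s

/-- `s` and `t` are incomparable in the tree order. -/
def Incomp (s t : BNode) : Prop := ¬ extends' s t ∧ ¬ extends' t s

/-- `D(s,t)`, the set of coordinates where `s` and `t` differ. -/
def diffSet (s t : BNode) : Set Ordinal := {ξ | s.1 ξ ≠ t.1 ξ}

/-- `Δ(s,t) = min D(s,t)`. -/
def delta (s t : BNode) : Ordinal := sInf (diffSet s t)

/-- The meet `s ∧ t = s ↾ Δ(s,t)`. -/
def meet (s t : BNode) : BNode := restrict s (delta s t)

/-- Lexicographic (non-strict) order on nodes of the same height. -/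
def lexLE (s t : BNode) : Prop := s = t ∨ t.1 (delta s t) = some true

/-- `∧(X)`: the set of pairwise meets of incomparable elements of `X`. -/
def wedgeSet (X : Set BNode) : Set BNode :=
  {w | ∃ s ∈ X, ∃ t ∈ X, Incomp s t ∧ w = meet s t}

def DownClosed (A : Set BNode) : Prop := ∀ t ∈ A, ∀ α, restrict t α ∈ A

def IsAntichainN (X : Set BNode) : Prop := ∀ s ∈ X, ∀ t ∈ X, s ≠ t → Incomp s t

/-- An Aronszajn tree: uncountable, downward closed, countable levels and chains. -/
def IsAronszajn (T : Set BNode) : Prop :=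
  DownClosed T ∧ ¬ T.Countable ∧ (∀ α, {t : BNode | t ∈ T ∧ ht t = α}.Countable) ∧
    ∀ c : Set BNode, c ⊆ T → (∀ s ∈ c, ∀ t ∈ c, extends' s t ∨ extends' t s) → c.Countable

/-- A subtree: an uncountable downward closed subset. -/
def IsSubtree (T A : Set BNode) : Prop := A ⊆ T ∧ DownClosed A ∧ ¬ A.Countable

def Coherent (T : Set BNode) : Prop :=
  ∀ s ∈ T, ∀ t ∈ T, ht s = ht t → (diffSet s t).Finite

def IsSpecial (T : Set BNode) : Prop :=
  ∃ f : BNode → ℕ, ∀ s ∈ T, ∀ t ∈ T, extends' s t → s ≠ t → f s ≠ f t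

def FinModClosed (T : Set BNode) : Prop :=
  ∀ t ∈ T, ∀ s : BNode, ht s = ht t → (diffSet s t).Finite → s ∈ T

/-- Club subsets of `ω₁`. -/
def IsClubBelow (C : Set Ordinal) : Prop :=
  C ⊆ Set.Iio omega1 ∧ (∀ a < omega1, ∃ b ∈ C, a < b) ∧
    ∀ a < omega1, (C ∩ Set.Iio a).Nonempty → sSup (C ∩ Set.Iio a) = a → a ∈ C

/-- Stationary subsets of `ω₁`. -/
def IsStationary (S : Set Ordinal) : Prop :=
  S ⊆ Set.Iio omega1 ∧ ∀ C, IsClubBelow C → (S ∩ C).Nonempty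

/-- `a` is a limit point of `C`. -/
def IsLimitOf (C : Set Ordinal) (a : Ordinal) : Prop :=
  (C ∩ Set.Iio a).Nonempty ∧ sSup (C ∩ Set.Iio a) = a

/-- Membership in `T^{[n]}`: an `≤_lex`-nondecreasing `n`-tuple from a single level of `T`. -/
def IsTup (T : Set BNode) (n : ℕ) (σ : Fin n → BNode) : Prop :=
  (∀ i, σ i ∈ T) ∧ (∀ i j, ht (σ i) = ht (σ j)) ∧
    ∀ i j : Fin n, i ≤ j → lexLE (σ i) (σ j)

/-- Coordinatewise restriction of a tuple. -/
def tres {n : ℕ} (σ : Fin n → BNode) (α : Ordinal) : Fin n → BNode :=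
  fun i => restrict (σ i) α

def tExt {n : ℕ} (σ τ : Fin n → BNode) : Prop := ∀ i, extends' (σ i) (τ i)

def tIncomp {n : ℕ} (σ τ : Fin n → BNode) : Prop := ¬ tExt σ τ ∧ ¬ tExt τ σ

def tdiff {n : ℕ} (σ τ : Fin n → BNode) : Set Ordinal :=
  {ξ | ∃ i, (σ i).1 ξ ≠ (τ i).1 ξ}

/-- `Δ(σ,τ)` for tuples: least level where some coordinate differs. -/
def tdelta {n : ℕ} (σ τ : Fin n → BNode) : Ordinal := sInf (tdiff σ τ)

def tmeet {n : ℕ} (σ τ : Fin n → BNode) : Fin n → BNode := tres σ (tdelta σ τ)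

def twedge {n : ℕ} (X : Set (Fin n → BNode)) : Set (Fin n → BNode) :=
  {w | ∃ σ ∈ X, ∃ τ ∈ X, tIncomp σ τ ∧ w = tmeet σ τ}

def tAntichain {n : ℕ} (X : Set (Fin n → BNode)) : Prop :=
  ∀ σ ∈ X, ∀ τ ∈ X, σ ≠ τ → tIncomp σ τ

/-- `σ ∈ K^{[n]} = K^n ∩ T^{[n]}`. -/
def KTup (T K : Set BNode) (n : ℕ) (σ : Fin n → BNode) : Prop :=
  IsTup T n σ ∧ ∀ i, σ i ∈ K

/-- The pair `{σ, τ}` (with `Ht σ ≤ Ht τ`) is regular: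
`D(τ(i), τ(0)) ∩ Ht(σ) = D(σ(i), σ(0))` for all `i < n`. -/
def RegPair (n : ℕ) (σ τ : Fin n → BNode) : Prop :=
  ∀ (h : 0 < n) (i : Fin n),
    diffSet (τ i) (τ ⟨0, h⟩) ∩ Set.Iio (ht (σ ⟨0, h⟩)) = diffSet (σ i) (σ ⟨0, h⟩)

/-- A set of tuples is regular if every pair of its elements is regular. -/
def RegSet {n : ℕ} (X : Set (Fin n → BNode)) : Prop :=
  ∀ σ ∈ X, ∀ τ ∈ X, (∀ i, ht (σ i) ≤ ht (τ i)) → RegPair n σ τ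

/-- A subtree of `T^{[n]}`: uncountable set of tuples closed under restriction. -/
def IsTupSubtree (T : Set BNode) (n : ℕ) (R : Set (Fin n → BNode)) : Prop :=
  (∀ σ ∈ R, IsTup T n σ) ∧ (∀ σ ∈ R, ∀ α, tres σ α ∈ R) ∧ ¬ R.Countable

/-- The family `F_n` of regular subtrees of `T^{[n]}` whose meets avoid `K^{[n]}`. -/
def Fn (T K : Set BNode) (n : ℕ) : Set (Set (Fin n → BNode)) :=
  {R | IsTupSubtree T n R ∧ RegSet R ∧ ∀ w ∈ twedge R, ¬ KTup T K n w}

/-- `F_n^⊥`: subtrees of `T^{[n]}` orthogonal to every member of `F_n`. -/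
def FnPerp (T K : Set BNode) (n : ℕ) : Set (Set (Fin n → BNode)) :=
  {B | IsTupSubtree T n B ∧ ∀ A ∈ Fn T K n, (A ∩ B).Countable}

/-- `⟨N_ξ : ξ ∈ C⟩` witnesses `φ₀(F_n)`. -/
def Phi0Witness (T K : Set BNode) (n : ℕ) (C : Set Ordinal)
    (N : Ordinal → Set (Set (Fin n → BNode))) : Prop :=
  IsClubBelow C ∧
  (∀ ξ ∈ C, (N ξ).Countable ∧ N ξ ⊆ Fn T K n ∪ FnPerp T K n) ∧
  (∀ ξ ∈ C, ∀ η ∈ C, ξ ≤ η → N ξ ⊆ N η) ∧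
  (∀ ν ∈ C, IsLimitOf C ν → N ν = ⋃ ξ ∈ C ∩ Set.Iio ν, N ξ) ∧
  (∀ ν ∈ C, ∀ σ : Fin n → BNode, IsTup T n σ → (∀ i, ht (σ i) = ν) →
    (∃ ν₀ < ν, ∀ ξ ∈ C, ν₀ < ξ → ξ < ν → ∃ A ∈ Fn T K n, A ∈ N ξ ∧ tres σ ξ ∈ A) ∨
    (∃ B ∈ FnPerp T K n, B ∈ N ν ∧ σ ∈ B))

/-- The coloring `K^{[n]}_φ`. -/
def KPhi (T K : Set BNode) (n : ℕ) (C : Set Ordinal)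
    (N : Ordinal → Set (Set (Fin n → BNode))) : Set (Fin n → BNode) :=
  {σ | IsTup T n σ ∧ ∃ ν ∈ C, (∀ i, ht (σ i) = ν) ∧
    ∃ B ∈ FnPerp T K n, B ∈ N ν ∧ σ ∈ B}

/-- The coloring `L^{[n]}_φ = (T^{[n]} ↾ C) \ K^{[n]}_φ`. -/
def LPhi (T K : Set BNode) (n : ℕ) (C : Set Ordinal)
    (N : Ordinal → Set (Set (Fin n → BNode))) : Set (Fin n → BNode) :=
  {σ | IsTup T n σ ∧ (∃ ν ∈ C, ∀ i, ht (σ i) = ν) ∧ σ ∉ KPhi T K n C N}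

/-- `ρ` is the `≤_lex`-sorted merge `σ ∪ τ` of the tuples `σ` and `τ`. -/
def IsMerge {n m : ℕ} (σ : Fin n → BNode) (τ : Fin m → BNode)
    (ρ : Fin (n + m) → BNode) : Prop :=
  (∀ i j : Fin (n + m), i ≤ j → lexLE (ρ i) (ρ j)) ∧
  (↑(List.ofFn ρ) : Multiset BNode) = ↑(List.ofFn σ) + ↑(List.ofFn τ)

/-- `σ` is a subsequence of `τ`. -/
def IsSubseq {m n : ℕ} (σ : Fin m → BNode) (τ : Fin n → BNode) : Prop :=
  ∃ ι : Fin m → Fin n, StrictMono ι ∧ σ = τ ∘ ι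

/-- A level sequence `{σ_α : α ∈ S}` in `T^{[n]}`. -/
def LevelSeq (T : Set BNode) (n : ℕ) (S : Set Ordinal)
    (σ : Ordinal → Fin n → BNode) : Prop :=
  ∀ α ∈ S, IsTup T n (σ α) ∧ ∀ i, ht (σ α i) = α

/-- The level sequence `{σ_α : α ∈ S}` is regular. -/
def RegSeq {n : ℕ} (S : Set Ordinal) (σ : Ordinal → Fin n → BNode) : Prop :=
  ∀ α ∈ S, ∀ β ∈ S, α ≤ β → RegPair n (σ α) (σ β)

/-- The tree `R_X` generated by `X` (downward closure). -/
def downClosure (X : Set BNode) : Set BNode :=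
  {r | ∃ t ∈ X, ∃ ξ ≤ ht t, r = restrict t ξ}

/-- The tree generated by a set of tuples. -/
def tDownClosure {n : ℕ} (X : Set (Fin n → BNode)) : Set (Fin n → BNode) :=
  {ρ | ∃ σ ∈ X, ∃ ξ, (∀ i, ξ ≤ ht (σ i)) ∧ ρ = tres σ ξ}

end Basis5
namespace Basis5

/-- Martin's Axiom `MA_{ℵ₁}`: every nonempty ccc partial preorder admits a filter
meeting any `ℵ₁`-many dense sets. -/
def CCCPre (P : Type 1) (le : P → P → Prop) : Prop :=
  ∀ A : Set P, (∀ p ∈ A, ∀ q ∈ A, p ≠ q → ¬ ∃ r, le r p ∧ le r q) → A.Countable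

def MAaleph1 : Prop :=
  ∀ (P : Type 1) (le : P → P → Prop), (∀ p, le p p) →
    (∀ p q r, le p q → le q r → le p r) → Nonempty P → CCCPre P le →
    ∀ (ι : Type 1) (D : ι → Set P), Cardinal.mk ι ≤ Cardinal.aleph 1 →
      (∀ i, ∀ p, ∃ q ∈ D i, le q p) →
      ∃ G : Set P, G.Nonempty ∧ (∀ p ∈ G, ∀ q, le p q → q ∈ G) ∧
        (∀ p ∈ G, ∀ q ∈ G, ∃ r ∈ G, le r p ∧ le r q) ∧ ∀ i, (G ∩ D i).Nonempty

/-- `π(X) = X`. -/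
def piClosed (X : Set BNode) : Prop :=
  ∀ s ∈ X, ∀ t ∈ X, ht s ≤ ht t → restrict t (ht s) ∈ X

/-- Every level-section of `X`, enumerated in `≤_lex`-increasing order, lies in `K_φ`. -/
def SectionsInKPhi (T K : Set BNode) (C : Set Ordinal)
    (N : (k : ℕ) → Ordinal → Set (Set (Fin k → BNode))) (X : Set BNode) : Prop :=
  ∀ α : Ordinal, {x ∈ X | ht x = α}.Nonempty →
    ∃ (k : ℕ) (ρ : Fin k → BNode), Function.Injective ρ ∧
      (∀ i j : Fin k, i ≤ j → lexLE (ρ i) (ρ j)) ∧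
      Set.range ρ = {x ∈ X | ht x = α} ∧ ρ ∈ KPhi T K k C (N k)

/-- All finite same-height `≤_lex`-sorted tuples from `X` lie in `K_φ`. -/
def FinLevelSubsetsInKPhi (T K : Set BNode) (C : Set Ordinal)
    (N : (k : ℕ) → Ordinal → Set (Set (Fin k → BNode))) (X : Set BNode) : Prop :=
  ∀ (k : ℕ) (ρ : Fin k → BNode), Function.Injective ρ → (∀ i, ρ i ∈ X) →
    (∀ i j, ht (ρ i) = ht (ρ j)) → (∀ i j : Fin k, i ≤ j → lexLE (ρ i) (ρ j)) →
    ρ ∈ KPhi T K k C (N k)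

section Forcing

variable {EM : Type 1}

/-- A condition of the forcing `∂*(K)`: a pair `(X_p, 𝓜_p)`.  Here `EM` is an abstract
type of (countable elementary submodels of `H(ω₂)`), `mem` its `∈`-relation,
`δe M = M ∩ ω₁`, and `E` the club `𝓔` of such models. -/
def IsCond (T K : Set BNode) (C : Set Ordinal)
    (N : (k : ℕ) → Ordinal → Set (Set (Fin k → BNode)))
    (mem : EM → EM → Prop) (δe : EM → Ordinal) (E : Set EM)
    (p : Set BNode × Set EM) : Prop :=
  p.1.Finite ∧ p.1 ⊆ T ∧ (∀ x ∈ p.1, ht x ∈ C) ∧ piClosed p.1 ∧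
  SectionsInKPhi T K C N p.1 ∧
  p.2.Finite ∧ p.2 ⊆ E ∧
  (∀ M ∈ p.2, ∀ M' ∈ p.2, M = M' ∨ mem M M' ∨ mem M' M) ∧
  (∀ x ∈ p.1, ∃ M ∈ p.2, ht x = δe M)

/-- The order of `∂*(K)`: coordinatewise reverse inclusion. -/
def condLE (p q : Set BNode × Set EM) : Prop := q.1 ⊆ p.1 ∧ q.2 ⊆ p.2

end Forcing

/-- Closure of `X` in the tree topology. -/
def clTree (X : Set BNode) : Set BNode :=
  X ∪ {t | Order.IsSuccLimit (ht t) ∧ ∀ β < ht t, ∃ s ∈ X, extends' s t ∧ β ≤ ht s}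

/-! ### Set-theoretic background: elementary submodels of `(V, ∈)`, properness, BPFA -/

/-- The language with a single binary relation (interpreted below as membership). -/
abbrev memLang : FirstOrder.Language := FirstOrder.Language.order

/-- `ZFSet.{0}` as a structure in the membership language: the unique binary relation
symbol is interpreted as `∈`. -/
instance : memLang.Structure ZFSet.{0} where
  RelMap | .le => fun x => x 0 ∈ x 1

/-- `R` is (codes) a partial order on the set `P`. -/
def ZIsPoset (P R : ZFSet.{0}) : Prop :=
  (∀ x y : ZFSet.{0}, ZFSet.pair x y ∈ R → x ∈ P ∧ y ∈ P) ∧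
  (∀ x ∈ P, ZFSet.pair x x ∈ R) ∧
  (∀ x y z : ZFSet.{0}, ZFSet.pair x y ∈ R → ZFSet.pair y z ∈ R → ZFSet.pair x z ∈ R) ∧
  (∀ x y : ZFSet.{0}, ZFSet.pair x y ∈ R → ZFSet.pair y x ∈ R → x = y)

def ZCompat (P R p q : ZFSet.{0}) : Prop :=
  ∃ r ∈ P, ZFSet.pair r p ∈ R ∧ ZFSet.pair r q ∈ R

def ZDense (P R D : ZFSet.{0}) : Prop :=
  (∀ x ∈ D, x ∈ P) ∧ ∀ p ∈ P, ∃ q ∈ D, ZFSet.pair q p ∈ R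

/-- Properness of the poset `(P, R)`, via countable elementary submodels of the
universe of sets: every condition in such a model has a generic extension. -/
def ZIsProper (P R : ZFSet.{0}) : Prop :=
  ∀ M : memLang.ElementarySubstructure ZFSet.{0}, (M : Set ZFSet.{0}).Countable →
    P ∈ (M : Set ZFSet.{0}) → R ∈ (M : Set ZFSet.{0}) →
    ∀ p ∈ (M : Set ZFSet.{0}), p ∈ P →
      ∃ q ∈ P, ZFSet.pair q p ∈ R ∧
        ∀ D ∈ (M : Set ZFSet.{0}), ZDense P R D →
          ∀ r ∈ P, ZFSet.pair r q ∈ R → ∃ s ∈ (M : Set ZFSet.{0}), s ∈ D ∧ ZCompat P R s r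

/-- The Bounded Proper Forcing Axiom: for every proper poset and `ℵ₁`-many maximal
antichains of size `≤ ℵ₁`, there is a filter meeting them all. -/
def BPFA : Prop :=
  ∀ P R : ZFSet.{0}, ZIsPoset P R → ZIsProper P R →
    ∀ (ι : Type 1) (A : ι → ZFSet.{0}), Cardinal.mk ι ≤ Cardinal.aleph 1 →
      (∀ i, (A i).toSet ⊆ P.toSet ∧ Cardinal.mk (A i).toSet ≤ Cardinal.aleph 1 ∧
        (∀ a ∈ A i, ∀ b ∈ A i, a ≠ b → ¬ ZCompat P R a b) ∧
        (∀ p ∈ P, ∃ a ∈ A i, ZCompat P R a p)) →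
      ∃ G : Set ZFSet.{0}, G ⊆ P.toSet ∧
        (∀ p ∈ G, ∀ q ∈ P.toSet, ZFSet.pair p q ∈ R → q ∈ G) ∧
        (∀ p ∈ G, ∀ q ∈ G, ∃ r ∈ G, ZFSet.pair r p ∈ R ∧ ZFSet.pair r q ∈ R) ∧
        ∀ i, ∃ a, a ∈ A i ∧ a ∈ G

/-! ### The axiom φ, stated for Aronszajn trees of `n`-tuples (the trees used in the paper) -/

/-- An Aronszajn tree of `n`-tuples (a subtree of the `n`-th power of `2^{<ω₁}`). -/
def TupAronszajn (n : ℕ) (𝒯 : Set (Fin n → BNode)) : Prop :=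
  (∀ σ ∈ 𝒯, (∀ i j, ht (σ i) = ht (σ j))) ∧
  (∀ σ ∈ 𝒯, ∀ α, tres σ α ∈ 𝒯) ∧ ¬ 𝒯.Countable ∧
  (∀ α, {σ ∈ 𝒯 | ∀ i, ht (σ i) = α}.Countable) ∧
  (∀ c ⊆ 𝒯, (∀ σ ∈ c, ∀ τ ∈ c, tExt σ τ ∨ tExt τ σ) → c.Countable)

/-- A subtree of a tuple-tree. -/
def TupSubtree {n : ℕ} (𝒯 A : Set (Fin n → BNode)) : Prop :=
  A ⊆ 𝒯 ∧ (∀ σ ∈ A, ∀ α, tres σ α ∈ A) ∧ ¬ A.Countable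

/-- `F^⊥` for a family `F` of subtrees of `𝒯`. -/
def GPerp {n : ℕ} (𝒯 : Set (Fin n → BNode)) (F : Set (Set (Fin n → BNode))) :
    Set (Set (Fin n → BNode)) :=
  {B | TupSubtree 𝒯 B ∧ ∀ A ∈ F, (A ∩ B).Countable}

/-- `φ₀(F)` for a family `F` of subtrees of the tree `𝒯`. -/
def GPhi0 {n : ℕ} (𝒯 : Set (Fin n → BNode)) (F : Set (Set (Fin n → BNode))) : Prop :=
  ∃ (C : Set Ordinal) (N : Ordinal → Set (Set (Fin n → BNode))),
    IsClubBelow C ∧ (∀ ξ ∈ C, (N ξ).Countable ∧ N ξ ⊆ F ∪ GPerp 𝒯 F) ∧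
    (∀ ξ ∈ C, ∀ η ∈ C, ξ ≤ η → N ξ ⊆ N η) ∧
    (∀ ν ∈ C, IsLimitOf C ν → N ν = ⋃ ξ ∈ C ∩ Set.Iio ν, N ξ) ∧
    ∀ ν ∈ C, ∀ σ ∈ 𝒯, (∀ i, ht (σ i) = ν) →
      (∃ ν₀ < ν, ∀ ξ ∈ C, ν₀ < ξ → ξ < ν → ∃ A ∈ F, A ∈ N ξ ∧ tres σ ξ ∈ A) ∨
      (∃ B ∈ GPerp 𝒯 F, B ∈ N ν ∧ σ ∈ B)

/-- The axiom `φ`: for every Aronszajn (tuple-)tree `𝒯` and every family `F`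
of subtrees of `𝒯`, `φ₀(F)` holds. -/
def phiAxiom : Prop :=
  ∀ (n : ℕ) (𝒯 : Set (Fin n → BNode)), TupAronszajn n 𝒯 →
    ∀ F : Set (Set (Fin n → BNode)), (∀ A ∈ F, TupSubtree 𝒯 A) → GPhi0 𝒯 F

end Basis5
namespace Basis5

/-!
Suppose every meet `σ ∧ τ` of incomparable `σ, τ ∈ X` avoids `K^{[n]}`. By coherence each
`σ ∈ X` has only finitely many differences `D(σ i, σ 0)`, all below its height. A Δ-system
argument then finds uncountably many `σ ∈ X` and pairwise distinct heights `η σ` at which these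
difference sets are cut to the same sets `D i`. The restrictions `σ ↾ η σ` generate a tree which
is regular, lies inside `R`, and whose meets are meets of members of `X`; so it belongs to `F_n`
while meeting `R` uncountably, contradicting `R ∈ F_n^⊥`.
-/

open Set

theorem bnode_ext {s t : BNode} (h : ∀ ξ, s.1 ξ = t.1 ξ) : s = t :=
  Subtype.ext (funext h)

theorem ht_eq {t : BNode} {a : Ordinal} (h : ∀ ξ, (t.1 ξ).isSome ↔ ξ < a) : ht t = a := by
  have huniq : ∀ b ∈ {b : Ordinal | ∀ ξ, (t.1 ξ).isSome ↔ ξ < b}, b = a := fun b hb =>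
    le_antisymm (not_lt.mp fun hab => (lt_irrefl a) ((h a).mp ((hb a).mpr hab)))
      (not_lt.mp fun hba => (lt_irrefl b) ((hb b).mp ((h b).mpr hba)))
  exact huniq _ (csInf_mem ⟨a, h⟩)

theorem isSome_iff_lt_ht (t : BNode) (ξ : Ordinal) : (t.1 ξ).isSome ↔ ξ < ht t := by
  obtain ⟨a, -, hfa⟩ := t.2
  rw [ht_eq hfa]
  exact hfa ξ

theorem ht_lt_omega1 (t : BNode) : ht t < omega1 := by
  obtain ⟨a, ha, hfa⟩ := t.2
  rwa [ht_eq hfa]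

theorem val_eq_none_of_ht_le {t : BNode} {ξ : Ordinal} (h : ht t ≤ ξ) : t.1 ξ = none :=
  Option.not_isSome_iff_eq_none.mp fun hs => (not_lt.mpr h) ((isSome_iff_lt_ht t ξ).mp hs)

@[simp]
theorem restrict_val (t : BNode) (α ξ : Ordinal) :
    (restrict t α).1 ξ = if ξ < α then t.1 ξ else none := rfl

theorem ht_restrict (t : BNode) (α : Ordinal) : ht (restrict t α) = min α (ht t) := by
  apply ht_eq
  intro ξ
  by_cases h : ξ < α <;> simp [h, isSome_iff_lt_ht]

theorem restrict_restrict (t : BNode) (α γ : Ordinal) :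
    restrict (restrict t α) γ = restrict t (min γ α) := by
  apply bnode_ext
  intro ξ
  by_cases h₁ : ξ < γ <;> by_cases h₂ : ξ < α <;> simp [h₁, h₂]

theorem restrict_of_ht_le {t : BNode} {α : Ordinal} (h : ht t ≤ α) : restrict t α = t := by
  apply bnode_ext
  intro ξ
  by_cases hξ : ξ < α
  · simp [hξ]
  · simp [hξ, val_eq_none_of_ht_le (h.trans (not_lt.mp hξ))]

theorem diffSet_restrict (s t : BNode) (α : Ordinal) :
    diffSet (restrict s α) (restrict t α) = diffSet s t ∩ Iio α := by
  ext ξ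
  by_cases h : ξ < α <;> simp [diffSet, h]

theorem diffSet_subset_Iio_ht {s t : BNode} (hst : ht s = ht t) : diffSet s t ⊆ Iio (ht t) :=
  fun ξ hξ => not_le.mp fun hle =>
    hξ (by rw [val_eq_none_of_ht_le (hst ▸ hle), val_eq_none_of_ht_le hle])

section Tuples

variable {n : ℕ}

theorem tres_tres (σ : Fin n → BNode) (α γ : Ordinal) :
    tres (tres σ α) γ = tres σ (min γ α) :=
  funext fun _ => restrict_restrict _ _ _

theorem tres_of_ht_le {σ : Fin n → BNode} {α : Ordinal} (h : ∀ i, ht (σ i) ≤ α) :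
    tres σ α = σ :=
  funext fun i => restrict_of_ht_le (h i)

theorem tExt_tres_of_eqOn {ρ ρ' : Fin n → BNode} {ξ ζ : Ordinal} (hξζ : ξ ≤ ζ)
    (h : ∀ x < ξ, ∀ i, (ρ i).1 x = (ρ' i).1 x) : tExt (tres ρ ξ) (tres ρ' ζ) := by
  intro i
  apply bnode_ext
  intro x
  simp only [tres, ht_restrict, restrict_val, lt_min_iff]
  by_cases hx : x < ξ
  · by_cases hxh : x < ht (ρ i)
    · simp [hx, hxh, lt_of_lt_of_le hx hξζ, h x hx i]
    · simp [hx, hxh, val_eq_none_of_ht_le (not_lt.mp hxh)]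
  · simp [hx]

theorem exists_mem_tdiff_of_tIncomp_tres {ρ ρ' : Fin n → BNode} {ξ ζ : Ordinal}
    (h : tIncomp (tres ρ ξ) (tres ρ' ζ)) : ∃ x ∈ tdiff ρ ρ', x < min ξ ζ := by
  by_contra! hnone
  have hagree : ∀ x < min ξ ζ, ∀ i, (ρ i).1 x = (ρ' i).1 x := fun x hx i =>
    not_not.mp fun hne => (not_le.mpr hx) (hnone x ⟨i, hne⟩)
  rcases le_total ξ ζ with hξζ | hζξ
  · exact h.1 (tExt_tres_of_eqOn hξζ fun x hx => hagree x (by simpa [hξζ] using hx))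
  · exact h.2 (tExt_tres_of_eqOn hζξ fun x hx i =>
      (hagree x (by simpa [hζξ] using hx) i).symm)

theorem mem_tdiff_tres_iff {ρ ρ' : Fin n → BNode} {ξ ζ x : Ordinal} (hx : x < min ξ ζ) :
    x ∈ tdiff (tres ρ ξ) (tres ρ' ζ) ↔ x ∈ tdiff ρ ρ' := by
  rw [lt_min_iff] at hx
  simp [tdiff, tres, hx.1, hx.2]

theorem tmeet_tres_of_tIncomp {ρ ρ' : Fin n → BNode} {ξ ζ : Ordinal}
    (h : tIncomp (tres ρ ξ) (tres ρ' ζ)) :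
    ρ ≠ ρ' ∧ tmeet (tres ρ ξ) (tres ρ' ζ) = tmeet ρ ρ' := by
  obtain ⟨x, hx, hxlt⟩ := exists_mem_tdiff_of_tIncomp_tres h
  have hne : ρ ≠ ρ' := by
    rintro rfl
    obtain ⟨i, hi⟩ := hx
    exact hi rfl
  have hδ : tdelta ρ ρ' < min ξ ζ := (csInf_le' hx).trans_lt hxlt
  have hδmem : tdelta ρ ρ' ∈ tdiff ρ ρ' := csInf_mem ⟨x, hx⟩
  have hdelta : tdelta (tres ρ ξ) (tres ρ' ζ) = tdelta ρ ρ' := by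
    refine le_antisymm (csInf_le' ((mem_tdiff_tres_iff hδ).mpr hδmem)) ?_
    refine le_csInf ⟨_, (mem_tdiff_tres_iff hδ).mpr hδmem⟩ fun y hy => not_lt.mp fun hyδ => ?_
    exact (not_lt.mpr (csInf_le' ((mem_tdiff_tres_iff (hyδ.trans hδ)).mp hy))) hyδ
  refine ⟨hne, ?_⟩
  rw [tmeet, hdelta, tres_tres, min_eq_left (hδ.le.trans (min_le_left ξ ζ))]
  rfl

theorem twedge_mono {A B : Set (Fin n → BNode)} (h : A ⊆ B) : twedge A ⊆ twedge B := by
  rintro w ⟨σ, hσ, τ, hτ, hστ, rfl⟩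
  exact ⟨σ, h hσ, τ, h hτ, hστ, rfl⟩

theorem twedge_tDownClosure_subset {X : Set (Fin n → BNode)} (hX : tAntichain X) :
    twedge (tDownClosure X) ⊆ twedge X := by
  rintro w ⟨_, ⟨ρ, hρ, ξ, -, rfl⟩, _, ⟨ρ', hρ', ζ, -, rfl⟩, hinc, rfl⟩
  obtain ⟨hne, hmeet⟩ := tmeet_tres_of_tIncomp hinc
  exact ⟨ρ, hρ, ρ', hρ', hX ρ hρ ρ' hρ' hne, hmeet⟩

theorem tres_mem_tDownClosure {X : Set (Fin n → BNode)} {σ : Fin n → BNode}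
    (hσ : σ ∈ tDownClosure X) (α : Ordinal) : tres σ α ∈ tDownClosure X := by
  obtain ⟨ρ, hρ, ξ, hξ, rfl⟩ := hσ
  exact ⟨ρ, hρ, min α ξ, fun i => (min_le_right α ξ).trans (hξ i), tres_tres ρ ξ α⟩

theorem tDownClosure_subset {X B : Set (Fin n → BNode)} (hB : ∀ σ ∈ B, ∀ α, tres σ α ∈ B)
    (hXB : X ⊆ B) : tDownClosure X ⊆ B := by
  rintro _ ⟨ρ, hρ, ξ, -, rfl⟩
  exact hB ρ (hXB hρ) ξ

theorem tDownClosure_subset_tDownClosure {X Y : Set (Fin n → BNode)}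
    (h : Y ⊆ tDownClosure X) : tDownClosure Y ⊆ tDownClosure X :=
  tDownClosure_subset (fun _ hσ α => tres_mem_tDownClosure hσ α) h

theorem subset_tDownClosure (i₀ : Fin n) {Y : Set (Fin n → BNode)}
    (hY : ∀ σ ∈ Y, ∀ i, ht (σ i) = ht (σ i₀)) : Y ⊆ tDownClosure Y := fun σ hσ =>
  ⟨σ, hσ, ht (σ i₀), fun i => (hY σ hσ i).ge, (tres_of_ht_le fun i => (hY σ hσ i).le).symm⟩

end Tuples

section Countability

theorem countable_Iic_of_lt_omega1 {o : Ordinal.{0}} (h : o < omega1) : (Iic o).Countable := by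
  rw [← Iio_insert]
  refine Countable.insert o ?_
  rw [← Cardinal.le_aleph0_iff_set_countable, Cardinal.mk_Iio_ordinal, Cardinal.lift_le_aleph0,
    ← Cardinal.lt_aleph_one_iff]
  exact Cardinal.lt_ord.mp h

variable {α β : Type*} {Z : Set α}

theorem exists_not_countable_fiber (hZ : ¬Z.Countable) {f : α → β} (hf : (f '' Z).Countable) :
    ∃ b, ¬{x ∈ Z | f x = b}.Countable := by
  by_contra! hfib
  refine hZ ((hf.biUnion fun b _ => hfib b).mono fun x hx => ?_)
  exact mem_biUnion (mem_image_of_mem f hx) ⟨hx, rfl⟩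

theorem not_countable_image_of_countable_fibers (hZ : ¬Z.Countable) {f : α → β}
    (hfib : ∀ b, {x ∈ Z | f x = b}.Countable) : ¬(f '' Z).Countable := fun hf =>
  (exists_not_countable_fiber hZ hf).elim fun b hb => hb (hfib b)

theorem exists_not_countable_fiber_of_countable_fibers (hZ : ¬Z.Countable) {f g : α → β}
    (hf : (f '' Z).Countable) (hg : ∀ b, {x ∈ Z | g x = b}.Countable) :
    ∃ b, ¬{x ∈ Z | f x = b ∧ g x ≠ b}.Countable := by
  obtain ⟨b, hb⟩ := exists_not_countable_fiber hZ hf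
  refine ⟨b, fun hc => hb ((hc.union (hg b)).mono fun x hx => ?_)⟩
  by_cases hgx : g x = b
  · exact Or.inr ⟨hx.1, hgx⟩
  · exact Or.inl ⟨hx.1, hx.2, hgx⟩

theorem exists_injOn_gt_of_not_countable_image {f : α → Ordinal.{0}}
    (hf : ¬(f '' Z).Countable) {β₀ : Ordinal} (hβ₀ : β₀ < omega1) :
    ∃ Y ⊆ Z, ¬Y.Countable ∧ InjOn f Y ∧ ∀ x ∈ Y, β₀ < f x := by
  obtain ⟨Y, hY, hbij⟩ := exists_subset_bijOn {x ∈ Z | β₀ < f x} f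
  refine ⟨Y, fun x hx => (hY hx).1, fun hc => hf ?_, hbij.injOn, fun x hx => (hY hx).2⟩
  refine ((hc.image f).union (countable_Iic_of_lt_omega1 hβ₀)).mono ?_
  rintro _ ⟨x, hx, rfl⟩
  by_cases hβx : β₀ < f x
  · exact Or.inl (hbij.image_eq ▸ mem_image_of_mem f ⟨hx, hβx⟩)
  · exact Or.inr (not_lt.mp hβx)

end Countability

section Traces

variable {α : Type*}

theorem exists_injOn_trace_eq_of_encard_le (a : α → Ordinal.{0}) (E : α → Set Ordinal.{0})
    (m : ℕ) (Z : Set α) (β₀ : Ordinal) (hZ : ¬Z.Countable) (hβ₀ : β₀ < omega1)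
    (ha : ∀ x ∈ Z, a x < omega1) (hfib : ∀ γ, {x ∈ Z | a x = γ}.Countable)
    (hE : ∀ x ∈ Z, E x ⊆ Iio (a x)) (hcard : ∀ x ∈ Z, (E x).encard ≤ m) :
    ∃ Y ⊆ Z, ¬Y.Countable ∧ ∃ η : α → Ordinal, InjOn η Y ∧
      (∀ x ∈ Y, β₀ < η x ∧ η x ≤ a x) ∧ ∃ r, ∀ x ∈ Y, E x ∩ Iio (η x) = r := by
  induction m generalizing E Z β₀ with
  | zero =>
    obtain ⟨Y, hYZ, hY, hinj, hβY⟩ :=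
      exists_injOn_gt_of_not_countable_image (not_countable_image_of_countable_fibers hZ hfib) hβ₀
    refine ⟨Y, hYZ, hY, a, hinj, fun x hx => ⟨hβY x hx, le_rfl⟩, ∅, fun x hx => ?_⟩
    have hEx : E x = ∅ := by simpa using hcard x (hYZ hx)
    simp [hEx]
  | succ m ih =>
    -- `d x` is the least element of `E x`, or `a x` when `E x` is empty. If `d` takes uncountably
    -- many values, `η := d` has empty traces; otherwise some `v` is the least element of
    -- uncountably many `E x` and is split off.
    set d : α → Ordinal := fun x => sInf (insert (a x) (E x))
    have hd_le : ∀ x, d x ≤ a x := fun x => csInf_le' (mem_insert _ _)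
    by_cases hdZ : (d '' Z).Countable
    · obtain ⟨v, hW⟩ := exists_not_countable_fiber_of_countable_fibers hZ hdZ hfib
      set W := {x ∈ Z | d x = v ∧ a x ≠ v}
      have hvE : ∀ x ∈ W, v ∈ E x := by
        rintro x ⟨-, rfl, hax⟩
        exact ((csInf_mem (insert_nonempty (a x) (E x))).resolve_left hax.symm)
      obtain ⟨x₀, hx₀⟩ : W.Nonempty := nonempty_iff_ne_empty.mpr fun h => hW (h ▸ countable_empty)
      have hv : v < omega1 := hx₀.2.1 ▸ (hd_le x₀).trans_lt (ha x₀ hx₀.1)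
      have hcardW : ∀ x ∈ W, (E x \ {v}).encard ≤ m := fun x hx => by
        have h := hcard x hx.1
        rw [← encard_sdiff_singleton_add_one (hvE x hx), Nat.cast_succ] at h
        exact (ENat.add_le_add_iff_right ENat.one_ne_top).mp h
      obtain ⟨Y, hYW, hY, η, hinj, hη, r, hr⟩ := ih (fun x => E x \ {v}) W (max β₀ v) hW
        (max_lt hβ₀ hv) (fun x hx => ha x hx.1)
        (fun γ => (hfib γ).mono fun x hx => mem_sep hx.1.1 hx.2)
        (fun x hx => sdiff_subset.trans (hE x hx.1)) hcardW
      refine ⟨Y, fun x hx => (hYW hx).1, hY, η, hinj,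
        fun x hx => ⟨(le_max_left _ _).trans_lt (hη x hx).1, (hη x hx).2⟩, insert v r,
        fun x hx => ?_⟩
      have hvη : v < η x := (le_max_right _ _).trans_lt (hη x hx).1
      rw [← hr x hx, ← inter_sdiff_right_comm, insert_sdiff_singleton]
      exact (insert_eq_of_mem (s := E x ∩ Iio (η x)) ⟨hvE x (hYW hx), hvη⟩).symm
    · obtain ⟨Y, hYZ, hY, hinj, hβY⟩ := exists_injOn_gt_of_not_countable_image hdZ hβ₀
      refine ⟨Y, hYZ, hY, d, hinj, fun x hx => ⟨hβY x hx, hd_le x⟩, ∅, fun x hx => ?_⟩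
      exact eq_empty_of_forall_notMem fun y hy =>
        (not_le.mpr hy.2) (csInf_le' (mem_insert_of_mem _ hy.1))

theorem exists_injOn_traces_eq {ι : Type*} [Finite ι] (Z : Set α) (hZ : ¬Z.Countable)
    (a : α → Ordinal.{0}) (ha : ∀ x ∈ Z, a x < omega1) (hfib : ∀ γ, {x ∈ Z | a x = γ}.Countable)
    (E : α → ι → Set Ordinal.{0}) (hfin : ∀ x ∈ Z, ∀ i, (E x i).Finite)
    (hE : ∀ x ∈ Z, ∀ i, E x i ⊆ Iio (a x)) :
    ∃ Y ⊆ Z, ¬Y.Countable ∧ ∃ η : α → Ordinal, InjOn η Y ∧ (∀ x ∈ Y, η x ≤ a x) ∧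
      ∃ D : ι → Set Ordinal, ∀ x ∈ Y, ∀ i, E x i ∩ Iio (η x) = D i := by
  obtain ⟨m, hm⟩ :=
    exists_not_countable_fiber hZ (to_countable ((fun x => (⋃ i, E x i).ncard) '' Z))
  have hcard : ∀ x ∈ {x ∈ Z | (⋃ i, E x i).ncard = m}, (⋃ i, E x i).encard ≤ m := fun x hx => by
    rw [← (finite_iUnion (hfin x hx.1)).cast_ncard_eq, hx.2]
  obtain ⟨Y₁, hY₁, hY₁unc, η, hinj, hη, r, hr⟩ :=
    exists_injOn_trace_eq_of_encard_le a (fun x => ⋃ i, E x i) m _ 0 hm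
      (Cardinal.lt_ord.mpr (by simp)) (fun x hx => ha x hx.1)
      (fun γ => (hfib γ).mono fun x hx => mem_sep hx.1.1 hx.2)
      (fun x hx => iUnion_subset (hE x hx.1)) hcard
  obtain ⟨x₀, hx₀⟩ : Y₁.Nonempty := nonempty_iff_ne_empty.mpr fun h => hY₁unc (h ▸ countable_empty)
  have hrfin : r.Finite := hr x₀ hx₀ ▸ (finite_iUnion (hfin x₀ (hY₁ hx₀).1)).inter_of_left _
  have htraces : ((fun x i => E x i ∩ Iio (η x)) '' Y₁).Countable := by
    refine (countable_pi fun _ => hrfin.finite_subsets.countable).mono ?_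
    rintro _ ⟨x, hx, rfl⟩ i
    exact hr x hx ▸ inter_subset_inter_left _ (subset_iUnion (E x) i)
  obtain ⟨D, hD⟩ := exists_not_countable_fiber hY₁unc htraces
  exact ⟨_, fun x hx => (hY₁ hx.1).1, hD, η, hinj.mono fun x hx => hx.1,
    fun x hx => (hη x hx.1).2, D, fun x hx => congrFun hx.2⟩

end Traces

section Regular

variable {n : ℕ}

def HasDiffPattern (hn : 0 < n) (D : Fin n → Set Ordinal) (Y : Set (Fin n → BNode)) : Prop :=
  ∀ σ ∈ Y, ∀ i, diffSet (σ i) (σ ⟨0, hn⟩) = D i ∩ Iio (ht (σ ⟨0, hn⟩))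

theorem HasDiffPattern.regSet {hn : 0 < n} {D : Fin n → Set Ordinal} {Y : Set (Fin n → BNode)}
    (hY : HasDiffPattern hn D Y) : RegSet Y := by
  intro σ hσ τ hτ hle _ i
  rw [hY τ hτ i, hY σ hσ i, inter_assoc, Iio_inter_Iio, min_eq_right (hle ⟨0, hn⟩)]

theorem HasDiffPattern.tDownClosure {hn : 0 < n} {D : Fin n → Set Ordinal}
    {Y : Set (Fin n → BNode)} (hY : HasDiffPattern hn D Y) :
    HasDiffPattern hn D (tDownClosure Y) := by
  rintro _ ⟨σ, hσ, ξ, hξ, rfl⟩ i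
  simp only [tres]
  rw [diffSet_restrict, hY σ hσ i, ht_restrict, min_eq_left (hξ _), inter_assoc, Iio_inter_Iio,
    min_eq_right (hξ _)]

theorem countable_isTup_ht_eq {T : Set BNode}
    (hlev : ∀ α, {t : BNode | t ∈ T ∧ ht t = α}.Countable) (i₀ : Fin n) (γ : Ordinal) :
    {σ | IsTup T n σ ∧ ht (σ i₀) = γ}.Countable := by
  refine (countable_pi fun _ : Fin n => hlev γ).mono fun σ hσ => ?_
  exact fun i => ⟨hσ.1.1 i, (hσ.1.2.1 i i₀).trans hσ.2⟩

theorem exists_subset_tDownClosure_hasDiffPattern {T : Set BNode} (hcoh : Coherent T)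
    (hlev : ∀ α, {t : BNode | t ∈ T ∧ ht t = α}.Countable) (hn : 0 < n)
    {X : Set (Fin n → BNode)} (hXT : ∀ σ ∈ X, IsTup T n σ) (hX : ¬X.Countable) :
    ∃ Y ⊆ tDownClosure X, ¬Y.Countable ∧ ∃ D, HasDiffPattern hn D Y := by
  set i₀ : Fin n := ⟨0, hn⟩
  obtain ⟨Y, hYX, hY, η, hinj, hη, D, hD⟩ := exists_injOn_traces_eq X hX (fun σ => ht (σ i₀))
    (fun σ _ => ht_lt_omega1 _)
    (fun γ => (countable_isTup_ht_eq hlev i₀ γ).mono fun σ hσ =>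
      show IsTup T n σ ∧ _ from ⟨hXT σ hσ.1, hσ.2⟩)
    (fun σ i => diffSet (σ i) (σ i₀))
    (fun σ hσ i => hcoh _ ((hXT σ hσ).1 i) _ ((hXT σ hσ).1 i₀) ((hXT σ hσ).2.1 i i₀))
    (fun σ hσ i => diffSet_subset_Iio_ht ((hXT σ hσ).2.1 i i₀))
  have hηle : ∀ σ ∈ Y, ∀ i, η σ ≤ ht (σ i) := fun σ hσ i =>
    (hXT σ (hYX hσ)).2.1 i₀ i ▸ hη σ hσ
  have hht : ∀ σ ∈ Y, ∀ i, ht (tres σ (η σ) i) = η σ := fun σ hσ i =>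
    (ht_restrict _ _).trans (min_eq_left (hηle σ hσ i))
  refine ⟨(fun σ => tres σ (η σ)) '' Y, ?_, ?_, D, ?_⟩
  · rintro _ ⟨σ, hσ, rfl⟩
    exact ⟨σ, hYX hσ, η σ, hηle σ hσ, rfl⟩
  · refine fun hc => hY (countable_of_injective_of_countable_image (fun σ hσ τ hτ h => ?_) hc)
    exact hinj hσ hτ (by simpa [hht σ hσ, hht τ hτ] using congrArg (fun ρ => ht (ρ i₀)) h)
  · rintro _ ⟨σ, hσ, rfl⟩ i
    rw [hht σ hσ, ← hD σ hσ i, inter_assoc, inter_self]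
    exact diffSet_restrict _ _ _

end Regular

theorem stmt11_general (T K : Set BNode) (hcoh : Coherent T) (hAr : IsAronszajn T)
    (n : ℕ) (R : Set (Fin n → BNode)) (hR : R ∈ FnPerp T K n)
    (X : Set (Fin n → BNode)) (hXR : X ⊆ R) (hanti : tAntichain X)
    (hunc : ¬ X.Countable) :
    ∃ σ ∈ X, ∃ τ ∈ X, tIncomp σ τ ∧ KTup T K n (tmeet σ τ) := by
  by_contra! hK
  rcases Nat.eq_zero_or_pos n with rfl | hn
  · exact hunc (Set.Subsingleton.countable fun _ _ _ _ => Subsingleton.elim _ _)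
  obtain ⟨Y, hYX, hY, D, hD⟩ :=
    exists_subset_tDownClosure_hasDiffPattern hcoh hAr.2.2.1 hn
      (fun σ hσ => hR.1.1 σ (hXR hσ)) hunc
  have hXR' : tDownClosure X ⊆ R := tDownClosure_subset hR.1.2.1 hXR
  have hAX : tDownClosure Y ⊆ tDownClosure X := tDownClosure_subset_tDownClosure hYX
  have hAR : tDownClosure Y ⊆ R := hAX.trans hXR'
  have hA : tDownClosure Y ∈ Fn T K n := by
    refine ⟨⟨fun σ hσ => hR.1.1 σ (hAR hσ), fun σ hσ => tres_mem_tDownClosure hσ,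
      fun hc => hY (hc.mono ?_)⟩, hD.tDownClosure.regSet, fun w hw hKw => ?_⟩
    · exact subset_tDownClosure ⟨0, hn⟩ fun σ hσ i => (hR.1.1 σ (hXR' (hYX hσ))).2.1 _ _
    · obtain ⟨σ, hσ, τ, hτ, hστ, rfl⟩ := twedge_tDownClosure_subset hanti (twedge_mono hAX hw)
      exact hK σ hσ τ hτ hστ hKw
  exact hA.1.2.2 (inter_eq_left.mpr hAR ▸ hR.2 _ hA)

/-- if `R ∈ F_n^⊥` then every uncountable antichain `X ⊆ R` contains
`σ, τ` with `σ ∧ τ ∈ K^{[n]}`. -/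
theorem stmt11 (T K : Set BNode) (hcoh : Coherent T) (hAr : IsAronszajn T)
    (hKT : K ⊆ T) (n : ℕ) (R : Set (Fin n → BNode)) (hR : R ∈ FnPerp T K n)
    (X : Set (Fin n → BNode)) (hXR : X ⊆ R) (hanti : tAntichain X)
    (hunc : ¬ X.Countable) :
    ∃ σ ∈ X, ∃ τ ∈ X, tIncomp σ τ ∧ KTup T K n (tmeet σ τ) :=
  stmt11_general T K hcoh hAr n R hR X hXR hanti hunc

end Basis5
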